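/- arXiv:2411.00450 — 2 statements merged into one kernel-verified Lean document; each statement's English description precedes it below -/
import Mathlib

section
/- Let m be a positive integer, n and r integers, δ ∈ {+1, -1}, and let c = c₁·c₂ with c₁, c₂ positive integers satisfying gcd(c₁, c₂) = 1. Then H^δ_{m,c}(n,r) = H^δ_{m·c₁, c₂}(n·⎯c₁, r) · H^δ_{m·c₂, c₁}(n·⎯c₂, r), where ⎯c₁ is any integer inverse of c₁ modulo c₂ and ⎯c₂ is any integer inverse of c₂ modulo c₁. -/
open Finset

/-- `e(x) = exp(2πix)`. -/
noncomputable def e (x : ℝ) : ℂ := Complex.exp (2 * Real.pi * Complex.I * x)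

/-- A canonical integer inverse of `x` modulo `c`. -/
noncomputable def zinv (c : ℕ) (x : ℤ) : ℤ := (((x : ZMod c)⁻¹).val : ℤ)

/-- The Kloosterman-type sum `H^δ_{m,c}(n,r)`. -/
noncomputable def Hkl (δ : ℤ) (m c : ℕ) (n r : ℤ) : ℂ :=
  ∑ ρ ∈ Finset.range c,
    if Nat.Coprime ρ c then
      e (((n * (zinv c (ρ : ℤ) + (ρ : ℤ)) : ℤ) : ℝ) / (c : ℝ)) *
        ∑ l ∈ Finset.range c,
          e ((((m : ℤ) * zinv c (ρ : ℤ) * (l : ℤ) ^ 2 +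
              r * (zinv c (ρ : ℤ) + δ) * (l : ℤ) : ℤ) : ℝ) / (c : ℝ))
    else 0

/-- `ε_c = 1` for `c ≡ 1 mod 4` and `ε_c = i` for `c ≡ 3 mod 4`. -/
noncomputable def epsC (c : ℕ) : ℂ := if c % 4 = 1 then 1 else Complex.I

/-- The classical Kloosterman sum `S(u,v;c)`. -/
noncomputable def Kl (u v : ℤ) (c : ℕ) : ℂ :=
  ∑ x ∈ Finset.range c,
    if Nat.Coprime x c then e (((u * (x : ℤ) + v * zinv c (x : ℤ) : ℤ) : ℝ) / (c : ℝ)) else 0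

/-- Fundamental discriminant. -/
def IsFundamentalDiscriminant (D : ℤ) : Prop :=
  (D % 4 = 1 ∧ Squarefree D) ∨
    (∃ d : ℤ, D = 4 * d ∧ (d % 4 = 2 ∨ d % 4 = 3) ∧ Squarefree d)

/-!
All summands depend only on residues, so `H^δ_{m,c}(n,r)` is a sum over units `ρ` of `ZMod c` of
`ψ(n(ρ⁻¹ + ρ))` times the quadratic Gauss sum `G(m ρ⁻¹, r(ρ⁻¹ + δ))`, `ψ` the standard additive
character. The Chinese remainder theorem splits residues and units mod `c₁c₂` into pairs, and
`ψ_{c₁c₂}(x) = ψ_{c₁}(⎯c₂ x) ψ_{c₂}(⎯c₁ x)` because `c₁⎯c₁ + c₂⎯c₂ ≡ 1 (mod c₁c₂)`, so both sums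
factor. In the Gauss sum mod `c₁` the substitution `l ↦ c₂ l` turns `G(⎯c₂ a, ⎯c₂ b)` into
`G(c₂ a, b)`, which is where the modulus `m c₂` comes from; in the phase `⎯c₂` stays with `n`.
-/

open ZMod (stdAddChar chineseRemainder)

lemma e_intCast_div (N : ℕ) [NeZero N] (j : ℤ) : e ((j : ℝ) / N) = stdAddChar (j : ZMod N) := by
  rw [e, ZMod.stdAddChar_coe]
  push_cast
  ring_nf

lemma intCast_zinv (c : ℕ) [NeZero c] (x : ℤ) : ((zinv c x : ℤ) : ZMod c) = (x : ZMod c)⁻¹ := by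
  rw [zinv, Int.cast_natCast, ZMod.natCast_zmod_val]

lemma sum_range_eq_sum_zmod_val {M : Type*} [AddCommMonoid M] (N : ℕ) [NeZero N] (f : ℕ → M) :
    ∑ x ∈ range N, f x = ∑ x : ZMod N, f x.val := by
  refine Finset.sum_nbij' (fun x => (x : ZMod N)) ZMod.val (by simp) (by simp [ZMod.val_lt])
    (fun x hx => ZMod.val_cast_of_lt (mem_range.mp hx)) (fun x _ => ZMod.natCast_zmod_val x)
    (fun x hx => by rw [ZMod.val_cast_of_lt (mem_range.mp hx)])

lemma Fintype.sum_ite_isUnit {M R : Type*} [Monoid M] [Fintype M] [Fintype Mˣ]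
    [AddCommMonoid R] [DecidablePred (IsUnit : M → Prop)] (f : M → R) :
    ∑ x, (if IsUnit x then f x else 0) = ∑ u : Mˣ, f u := by
  rw [← Finset.sum_filter]
  refine Eq.trans ?_ (Finset.sum_map univ ⟨Units.val, Units.val_injective⟩ f)
  congr 1
  ext x
  simp only [mem_map, mem_univ, true_and, mem_filter]
  rfl

lemma Fintype.sum_mul_sum_of_equiv {α β γ R : Type*} [Fintype α] [Fintype β] [Fintype γ]
    [NonUnitalNonAssocSemiring R] (π : α ≃ β × γ) (f : β → R) (g : γ → R) :
    ∑ a, f (π a).1 * g (π a).2 = (∑ b, f b) * ∑ c, g c := by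
  rw [Fintype.sum_mul_sum, ← Fintype.sum_prod_type' (fun b c => f b * g c)]
  exact π.sum_comp (fun p => f p.1 * g p.2)

section
variable {N : ℕ} [NeZero N]

noncomputable def quadGaussSum (a b : ZMod N) : ℂ := ∑ l : ZMod N, stdAddChar (a * l ^ 2 + b * l)

noncomputable def hklZMod (δ m n r : ZMod N) : ℂ :=
  ∑ ρ : (ZMod N)ˣ, stdAddChar (n * ((↑ρ⁻¹ : ZMod N) + (ρ : ZMod N))) *
    quadGaussSum (m * (↑ρ⁻¹ : ZMod N)) (r * ((↑ρ⁻¹ : ZMod N) + δ))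

lemma Hkl_eq_hklZMod (δ : ℤ) (m : ℕ) (n r : ℤ) : Hkl δ m N n r = hklZMod (δ : ZMod N) m n r := by
  simp only [Hkl, e_intCast_div]
  push_cast [intCast_zinv, ← ZMod.isUnit_iff_coprime]
  simp only [sum_range_eq_sum_zmod_val, ZMod.natCast_zmod_val]
  rw [Fintype.sum_ite_isUnit, hklZMod]
  simp only [ZMod.inv_coe_unit, quadGaussSum]

lemma quadGaussSum_mul_of_mul_eq_one {u v : ZMod N} (huv : u * v = 1) (a b : ZMod N) :
    quadGaussSum (v * a) (v * b) = quadGaussSum (u * a) b := by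
  rw [quadGaussSum, quadGaussSum, ← Equiv.sum_comp (Units.mulLeft (Units.mkOfMulEqOne u v huv))]
  refine Fintype.sum_congr _ _ fun l => ?_
  congr 1
  simp only [Units.mulLeft, Equiv.coe_fn_mk, Units.val_mkOfMulEqOne]
  linear_combination (a * u * l ^ 2 + b * l) * huv

end

lemma stdAddChar_intCast_of_mul_eq {N M : ℕ} [NeZero N] [NeZero M] {d : ℕ} (hd : N * d = M)
    (k : ℤ) : stdAddChar (k : ZMod N) = stdAddChar ((d * k : ℤ) : ZMod M) := by
  subst hd
  have hd : (d : ℂ) ≠ 0 := by exact_mod_cast right_ne_zero_of_mul (NeZero.ne (N * d))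
  rw [ZMod.stdAddChar_coe, ZMod.stdAddChar_coe]
  push_cast
  field_simp

section
variable {c₁ c₂ : ℕ} [NeZero c₁] [NeZero c₂]

lemma stdAddChar_eq_mul_chineseRemainder (h : c₁.Coprime c₂) {M₁ : ZMod c₂} {M₂ : ZMod c₁}
    (hM₁ : (c₁ : ZMod c₂) * M₁ = 1) (hM₂ : (c₂ : ZMod c₁) * M₂ = 1) (x : ZMod (c₁ * c₂)) :
    stdAddChar x =
      stdAddChar (M₂ * (chineseRemainder h x).1) * stdAddChar (M₁ * (chineseRemainder h x).2) := by
  obtain ⟨m₁, rfl⟩ := ZMod.intCast_surjective M₁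
  obtain ⟨m₂, rfl⟩ := ZMod.intCast_surjective M₂
  obtain ⟨j, rfl⟩ := ZMod.intCast_surjective x
  have hM : ((c₁ * m₁ + c₂ * m₂ : ℤ) : ZMod (c₁ * c₂)) = 1 := by
    apply (chineseRemainder h).injective
    simp only [map_intCast, map_one, Prod.ext_iff, Prod.fst_intCast, Prod.snd_intCast,
      Prod.fst_one, Prod.snd_one]
    push_cast
    simp [hM₁, hM₂]
  simp only [map_intCast, Prod.fst_intCast, Prod.snd_intCast]
  rw [← Int.cast_mul, ← Int.cast_mul,
    stdAddChar_intCast_of_mul_eq (N := c₁) (d := c₂) rfl (m₂ * j),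
    stdAddChar_intCast_of_mul_eq (N := c₂) (d := c₁) (mul_comm c₂ c₁) (m₁ * j),
    ← AddChar.map_add_eq_mul]
  congr 1
  push_cast at hM ⊢
  linear_combination -(j : ZMod (c₁ * c₂)) * hM

lemma quadGaussSum_mul_coprime (h : c₁.Coprime c₂) (a b : ZMod (c₁ * c₂)) :
    quadGaussSum a b =
      quadGaussSum ((c₂ : ZMod c₁) * (chineseRemainder h a).1) (chineseRemainder h b).1 *
        quadGaussSum ((c₁ : ZMod c₂) * (chineseRemainder h a).2) (chineseRemainder h b).2 := by
  have hM₁ := ZMod.coe_mul_inv_eq_one c₁ h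
  have hM₂ := ZMod.coe_mul_inv_eq_one c₂ h.symm
  rw [← quadGaussSum_mul_of_mul_eq_one hM₁, ← quadGaussSum_mul_of_mul_eq_one hM₂, quadGaussSum,
    quadGaussSum, quadGaussSum, ← Fintype.sum_mul_sum_of_equiv (chineseRemainder h).toEquiv]
  refine Fintype.sum_congr _ _ fun l => ?_
  rw [stdAddChar_eq_mul_chineseRemainder h hM₁ hM₂]
  simp only [map_add, map_mul, map_pow, Prod.fst_add, Prod.snd_add, Prod.fst_mul, Prod.snd_mul,
    Prod.pow_fst, Prod.pow_snd, RingEquiv.toEquiv_eq_coe, EquivLike.coe_coe]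
  ring_nf

lemma hklZMod_mul_coprime (h : c₁.Coprime c₂) {M₁ : ZMod c₂} {M₂ : ZMod c₁}
    (hM₁ : (c₁ : ZMod c₂) * M₁ = 1) (hM₂ : (c₂ : ZMod c₁) * M₂ = 1) (δ m n r : ZMod (c₁ * c₂)) :
    hklZMod δ m n r =
      hklZMod (chineseRemainder h δ).1 ((c₂ : ZMod c₁) * (chineseRemainder h m).1)
          (M₂ * (chineseRemainder h n).1) (chineseRemainder h r).1 *
        hklZMod (chineseRemainder h δ).2 ((c₁ : ZMod c₂) * (chineseRemainder h m).2)
          (M₁ * (chineseRemainder h n).2) (chineseRemainder h r).2 := by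
  let π : (ZMod (c₁ * c₂))ˣ ≃* (ZMod c₁)ˣ × (ZMod c₂)ˣ :=
    (Units.mapEquiv (chineseRemainder h).toMulEquiv).trans MulEquiv.prodUnits
  have hπ (u : (ZMod (c₁ * c₂))ˣ) : ((π u).1 : ZMod c₁) = (chineseRemainder h u).1 ∧
      ((π u).2 : ZMod c₂) = (chineseRemainder h u).2 :=
    ⟨rfl, rfl⟩
  rw [hklZMod, hklZMod, hklZMod, ← Fintype.sum_mul_sum_of_equiv π.toEquiv]
  refine Fintype.sum_congr _ _ fun ρ => ?_
  simp only [MulEquiv.toEquiv_eq_coe, EquivLike.coe_coe, ← Prod.fst_inv, ← Prod.snd_inv, ← map_inv,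
    hπ]
  rw [stdAddChar_eq_mul_chineseRemainder h hM₁ hM₂, quadGaussSum_mul_coprime h]
  simp only [map_add, map_mul, Prod.fst_add, Prod.snd_add, Prod.fst_mul, Prod.snd_mul]
  ring_nf

end

theorem statement9_general (m : ℕ) (n r δ : ℤ)
    (c c₁ c₂ : ℕ) (hc₁ : 0 < c₁) (hc₂ : 0 < c₂) (hc : c = c₁ * c₂)
    (hcop : Nat.Coprime c₁ c₂)
    (M₁ M₂ : ℤ) (hM₁ : (c₁ : ℤ) * M₁ ≡ 1 [ZMOD (c₂ : ℤ)])
    (hM₂ : (c₂ : ℤ) * M₂ ≡ 1 [ZMOD (c₁ : ℤ)]) :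
    Hkl δ m c n r = Hkl δ (m * c₁) c₂ (n * M₁) r * Hkl δ (m * c₂) c₁ (n * M₂) r := by
  subst hc
  have := NeZero.of_pos hc₁
  have := NeZero.of_pos hc₂
  have hM₁' : (c₁ : ZMod c₂) * M₁ = 1 := by
    simpa using (ZMod.intCast_eq_intCast_iff _ _ c₂).2 hM₁
  have hM₂' : (c₂ : ZMod c₁) * M₂ = 1 := by
    simpa using (ZMod.intCast_eq_intCast_iff _ _ c₁).2 hM₂
  rw [Hkl_eq_hklZMod, Hkl_eq_hklZMod, Hkl_eq_hklZMod, hklZMod_mul_coprime hcop hM₁' hM₂', mul_comm]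
  simp only [map_intCast, map_natCast, Prod.fst_intCast, Prod.snd_intCast, Prod.fst_natCast,
    Prod.snd_natCast]
  push_cast
  ring_nf

/-- Twisted multiplicativity of the Kloosterman-type sums. -/
theorem statement9 (m : ℕ) (hm : 0 < m) (n r δ : ℤ) (hδ : δ = 1 ∨ δ = -1)
    (c c₁ c₂ : ℕ) (hc₁ : 0 < c₁) (hc₂ : 0 < c₂) (hc : c = c₁ * c₂)
    (hcop : Nat.Coprime c₁ c₂)
    (M₁ M₂ : ℤ) (hM₁ : (c₁ : ℤ) * M₁ ≡ 1 [ZMOD (c₂ : ℤ)])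
    (hM₂ : (c₂ : ℤ) * M₂ ≡ 1 [ZMOD (c₁ : ℤ)]) :
    Hkl δ m c n r = Hkl δ (m * c₁) c₂ (n * M₁) r * Hkl δ (m * c₂) c₁ (n * M₂) r :=
  statement9_general m n r δ c c₁ c₂ hc₁ hc₂ hc hcop M₁ M₂ hM₁ hM₂
end

section
/- Let q be an odd positive integer, M a positive integer with gcd(q, M) = 1, D and r integers, and δ ∈ {+1, -1}. Then Σ_{v mod q, v^2 ≡ 1 (mod q)} e( ⎯M·D·v/q + δ·⎯q·r^2/M ) = Σ_{(a,b): a,b ≥ 1, ab = q, gcd(a,b)=1} e( ⎯M·D·⎯a/b − ⎯M·D·⎯b/a + δ·⎯(ab)·r^2/M ), where ⎯M denotes an integer inverse of M modulo q (respectively modulo b or modulo a in the corresponding terms), ⎯q and ⎯(ab) denote integer inverses of q = ab modulo M, ⎯a an inverse of a modulo b, and ⎯b an inverse of b modulo a; each summand is independent of the choices of inverses. -/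
/-! For odd `q`, the square roots of unity modulo `q` correspond to the coprime factorizations
`q = a * b` through the Chinese remainder theorem: `v ≡ -1 (mod a)` and `v ≡ 1 (mod b)`, with
inverse `v ↦ gcd(q, v + 1)`; oddness is what makes `a` and `b` coprime, since `gcd(a, b) ∣ 2`.
The root belonging to `(a, b)` is `a * ā - b * b̄`, where `ā = a⁻¹ mod b` and `b̄ = b⁻¹ mod a`,
and splitting `M̄ D (a * ā - b * b̄) / q` into a fraction over `b` and one over `a` gives the
summands on the right. -/

open Finset

lemma e_add (x y : ℝ) : e (x + y) = e x * e y := by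
  rw [e, e, e, ← Complex.exp_add]
  push_cast
  ring_nf

lemma e_intCast (n : ℤ) : e n = 1 := by
  rw [e, ← Complex.exp_int_mul_two_pi_mul_I n]
  push_cast
  ring_nf

lemma e_intCast_div_congr {c : ℕ} {m n : ℤ} (h : m ≡ n [ZMOD c]) :
    e ((m : ℝ) / c) = e ((n : ℝ) / c) := by
  rcases eq_or_ne c 0 with rfl | hc
  · simp
  obtain ⟨k, hk⟩ := h.dvd
  have hn : (n : ℝ) / c = m / c + k := by
    rw [show n = m + c * k by omega]
    push_cast
    field_simp
  rw [hn, e_add, e_intCast, mul_one]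

lemma intCast_zinv_of_dvd {c d x : ℕ} [NeZero c] (hdc : d ∣ c) (hx : x.Coprime c) :
    ((zinv c x : ℤ) : ZMod d) = (x : ZMod d)⁻¹ := by
  have h := congrArg (ZMod.castHom hdc (ZMod d)) (ZMod.coe_mul_inv_eq_one x hx)
  rw [map_mul, map_one, map_natCast, ZMod.castHom_apply, ZMod.cast_eq_val] at h
  exact (ZMod.inv_eq_of_mul_eq_one _ _ _ (by simpa [zinv] using h)).symm

lemma zinv_modEq_of_dvd {c d x : ℕ} [NeZero c] [NeZero d] (hdc : d ∣ c) (hx : x.Coprime c) :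
    zinv d x ≡ zinv c x [ZMOD d] := by
  rw [← ZMod.intCast_eq_intCast_iff, intCast_zinv_of_dvd dvd_rfl (hx.coprime_dvd_right hdc),
    intCast_zinv_of_dvd hdc hx]

lemma natCast_mul_zinv_modEq_one {c x : ℕ} [NeZero c] (hx : x.Coprime c) :
    (x : ℤ) * zinv c x ≡ 1 [ZMOD c] := by
  rw [← ZMod.intCast_eq_intCast_iff]
  push_cast
  rw [intCast_zinv_of_dvd dvd_rfl hx, ZMod.coe_mul_inv_eq_one x hx]

noncomputable def crtSqrtOne (a b : ℕ) : ℤ := a * zinv b a - b * zinv a b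

lemma crtSqrtOne_modEq_neg_one {a b : ℕ} [NeZero a] (h : a.Coprime b) :
    crtSqrtOne a b ≡ -1 [ZMOD a] := by
  have := (Int.modEq_zero_iff_dvd.2 (dvd_mul_right (a : ℤ) (zinv b a))).sub
    (natCast_mul_zinv_modEq_one h.symm)
  simpa [crtSqrtOne] using this

lemma crtSqrtOne_modEq_one {a b : ℕ} [NeZero b] (h : a.Coprime b) :
    crtSqrtOne a b ≡ 1 [ZMOD b] := by
  have := (natCast_mul_zinv_modEq_one h).sub
    (Int.modEq_zero_iff_dvd.2 (dvd_mul_right (b : ℤ) (zinv a b)))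
  simpa [crtSqrtOne] using this

lemma modEq_crtSqrtOne_iff {a b : ℕ} [NeZero a] [NeZero b] (h : a.Coprime b) {v : ℤ} :
    v ≡ crtSqrtOne a b [ZMOD (a * b : ℕ)] ↔ v ≡ -1 [ZMOD a] ∧ v ≡ 1 [ZMOD b] := by
  rw [Nat.cast_mul, ← Int.modEq_and_modEq_iff_modEq_mul (by simpa using h)]
  have ha := crtSqrtOne_modEq_neg_one h
  have hb := crtSqrtOne_modEq_one h
  unfold Int.ModEq at *
  rw [ha, hb]

lemma crtSqrtOne_sq_modEq_one {a b : ℕ} [NeZero a] [NeZero b] (h : a.Coprime b) :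
    crtSqrtOne a b ^ 2 ≡ 1 [ZMOD (a * b : ℕ)] := by
  rw [Nat.cast_mul, ← Int.modEq_and_modEq_iff_modEq_mul (by simpa using h)]
  exact ⟨by simpa using (crtSqrtOne_modEq_neg_one h).pow 2,
    by simpa using (crtSqrtOne_modEq_one h).pow 2⟩

lemma coprime_of_modEq_neg_one_of_modEq_one {a b : ℕ} (hb : Odd b) {v : ℤ}
    (hva : v ≡ -1 [ZMOD a]) (hvb : v ≡ 1 [ZMOD b]) : a.Coprime b := by
  have h := ((hva.of_dvd (Int.natCast_dvd_natCast.2 (Nat.gcd_dvd_left a b))).symm.trans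
    (hvb.of_dvd (Int.natCast_dvd_natCast.2 (Nat.gcd_dvd_right a b)))).dvd
  norm_num at h
  exact Nat.Coprime.eq_one_of_dvd (hb.of_dvd_nat (Nat.gcd_dvd_right a b)).coprime_two_right
    (by exact_mod_cast h)

lemma gcd_add_one_eq_of_modEq {a b v : ℕ} (hb : Odd b) (h : a.Coprime b)
    (hva : (v : ℤ) ≡ -1 [ZMOD a]) (hvb : (v : ℤ) ≡ 1 [ZMOD b]) :
    (a * b).gcd (v + 1) = a := by
  have ha : a ∣ v + 1 := by exact_mod_cast (by simpa using hva.symm.dvd : (a : ℤ) ∣ v + 1)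
  have hb' : (v + 1).Coprime b := coprime_of_modEq_neg_one_of_modEq_one hb
    (Int.modEq_iff_dvd.2 ⟨-1, by push_cast; ring⟩) hvb
  rw [Nat.gcd_comm, Nat.Coprime.gcd_mul _ h, Nat.gcd_eq_right ha, hb'.gcd_eq_one, mul_one]

lemma modEq_neg_one_gcd_and_modEq_one_div_gcd {q v : ℕ} (hv : (v : ZMod q) ^ 2 = 1) :
    (v : ℤ) ≡ -1 [ZMOD q.gcd (v + 1)] ∧ (v : ℤ) ≡ 1 [ZMOD (q / q.gcd (v + 1) : ℕ)] := by
  set g := q.gcd (v + 1)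
  have hg : g ≠ 0 := Nat.gcd_ne_zero_right (Nat.succ_ne_zero v)
  have hgv : (g : ℤ) ∣ v + 1 := by exact_mod_cast Nat.gcd_dvd_right q (v + 1)
  refine ⟨(Int.modEq_iff_dvd.2 (by simpa using hgv)).symm, (Int.modEq_iff_dvd.2 ?_).symm⟩
  have hgcd : ((q : ℤ).gcd (v + 1) : ℤ) = g := by
    rw [show (v : ℤ) + 1 = (v + 1 : ℕ) by push_cast; ring, Int.gcd_natCast_natCast]
  have hq : (q : ℤ) ∣ g * (v - 1) := by
    rw [← hgcd, Int.dvd_gcd_mul_iff_dvd_mul, ← ZMod.intCast_zmod_eq_zero_iff_dvd]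
    push_cast
    linear_combination hv
  rw [← Nat.mul_div_cancel' (Nat.gcd_dvd_left q (v + 1)), Nat.cast_mul] at hq
  exact (mul_dvd_mul_iff_left (by exact_mod_cast hg)).1 hq

lemma coprime_gcd_add_one_div_gcd {q v : ℕ} (hq : Odd q) (hv : (v : ZMod q) ^ 2 = 1) :
    (q.gcd (v + 1)).Coprime (q / q.gcd (v + 1)) :=
  coprime_of_modEq_neg_one_of_modEq_one (hq.of_dvd_nat (Nat.div_dvd_of_dvd (Nat.gcd_dvd_left _ _)))
    (modEq_neg_one_gcd_and_modEq_one_div_gcd hv).1 (modEq_neg_one_gcd_and_modEq_one_div_gcd hv).2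

lemma modEq_crtSqrtOne_gcd_add_one {q v : ℕ} (hq : Odd q) (hv : (v : ZMod q) ^ 2 = 1) :
    (v : ℤ) ≡ crtSqrtOne (q.gcd (v + 1)) (q / q.gcd (v + 1)) [ZMOD q] := by
  have hgq : q.gcd (v + 1) * (q / q.gcd (v + 1)) = q := Nat.mul_div_cancel' (Nat.gcd_dvd_left _ _)
  have : NeZero (q.gcd (v + 1)) := ⟨left_ne_zero_of_mul (hgq.trans_ne hq.pos.ne')⟩
  have : NeZero (q / q.gcd (v + 1)) := ⟨right_ne_zero_of_mul (hgq.trans_ne hq.pos.ne')⟩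
  simpa only [hgq] using (modEq_crtSqrtOne_iff (coprime_gcd_add_one_div_gcd hq hv)).2
    (modEq_neg_one_gcd_and_modEq_one_div_gcd hv)

lemma val_intCast_modEq {n : ℕ} [NeZero n] (x : ℤ) :
    ((x : ZMod n).val : ℤ) ≡ x [ZMOD n] := by
  rw [ZMod.val_intCast]
  exact Int.mod_modEq x n

lemma exists_eq_mul_of_mem_coprime_divisors {q a : ℕ}
    (ha : a ∈ q.divisors.filter fun a => a.Coprime (q / a)) :
    ∃ b, q = a * b ∧ q / a = b ∧ NeZero a ∧ NeZero b ∧ a.Coprime b := by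
  obtain ⟨⟨⟨b, rfl⟩, hq⟩, hab⟩ := by simpa only [mem_filter, Nat.mem_divisors] using ha
  have ha0 : a ≠ 0 := left_ne_zero_of_mul hq
  rw [Nat.mul_div_cancel_left b (Nat.pos_of_ne_zero ha0)] at hab ⊢
  exact ⟨b, rfl, rfl, ⟨ha0⟩, ⟨right_ne_zero_of_mul hq⟩, hab⟩

lemma sum_filter_sq_eq_one_eq_sum_coprime_divisors {R : Type*} [AddCommMonoid R] {q : ℕ}
    (hq : Odd q) (f : ℤ → R) (hf : ∀ m n, m ≡ n [ZMOD q] → f m = f n) :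
    ∑ v ∈ (range q).filter (fun v : ℕ => (v : ZMod q) ^ 2 = 1), f v =
      ∑ a ∈ q.divisors.filter (fun a => a.Coprime (q / a)), f (crtSqrtOne a (q / a)) := by
  have : NeZero q := ⟨hq.pos.ne'⟩
  refine (sum_nbij' (fun a => (crtSqrtOne a (q / a) : ZMod q).val) (fun v => q.gcd (v + 1))
    ?_ ?_ ?_ ?_ ?_).symm
  · intro a ha
    obtain ⟨b, rfl, hb, _, _, hab⟩ := exists_eq_mul_of_mem_coprime_divisors ha
    rw [hb]
    simp only [mem_filter, mem_range, ZMod.val_lt, ZMod.natCast_zmod_val, true_and]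
    exact_mod_cast (ZMod.intCast_eq_intCast_iff _ 1 _).2 (crtSqrtOne_sq_modEq_one hab)
  · intro v hv
    simp only [mem_filter, Nat.mem_divisors, Nat.gcd_dvd_left, ne_eq, true_and]
    exact ⟨NeZero.ne q, coprime_gcd_add_one_div_gcd hq (mem_filter.1 hv).2⟩
  · intro a ha
    obtain ⟨b, rfl, hb, _, _, hab⟩ := exists_eq_mul_of_mem_coprime_divisors ha
    rw [hb]
    have hv := (modEq_crtSqrtOne_iff hab).1 (val_intCast_modEq (crtSqrtOne a b))
    exact gcd_add_one_eq_of_modEq (hq.of_dvd_nat (dvd_mul_left b a)) hab hv.1 hv.2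
  · intro v hv
    obtain ⟨hvq, hv⟩ := by simpa only [mem_filter, mem_range] using hv
    rw [← (ZMod.intCast_eq_intCast_iff _ _ _).2 (modEq_crtSqrtOne_gcd_add_one hq hv),
      Int.cast_natCast, ZMod.val_cast_of_lt hvq]
  · exact fun a _ => hf _ _ (val_intCast_modEq _).symm

lemma e_sub_eq_e_crtSqrtOne {a b M : ℕ} [NeZero a] [NeZero b] (hM : M.Coprime (a * b))
    (D : ℤ) :
    e (((zinv b M * D * zinv b a : ℤ) : ℝ) / b - ((zinv a M * D * zinv a b : ℤ) : ℝ) / a) =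
      e (((zinv (a * b) M * D * crtSqrtOne a b : ℤ) : ℝ) / ((a * b : ℕ) : ℝ)) := by
  have hb : zinv b M ≡ zinv (a * b) M [ZMOD b] := zinv_modEq_of_dvd (dvd_mul_left b a) hM
  have ha : zinv a M ≡ zinv (a * b) M [ZMOD a] := zinv_modEq_of_dvd (dvd_mul_right a b) hM
  have hsplit :
      ((zinv b M * D * zinv b a : ℤ) : ℝ) / b - ((zinv a M * D * zinv a b : ℤ) : ℝ) / a =
        ((a * (zinv b M * D * zinv b a) - b * (zinv a M * D * zinv a b) : ℤ) : ℝ) /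
          (a * b : ℕ) := by
    have : (a : ℝ) ≠ 0 := Nat.cast_ne_zero.2 (NeZero.ne a)
    have : (b : ℝ) ≠ 0 := Nat.cast_ne_zero.2 (NeZero.ne b)
    push_cast
    field_simp
  rw [hsplit]
  refine e_intCast_div_congr ?_
  rw [Nat.cast_mul]
  have hsub := (((hb.mul_right D).mul_right (zinv b a)).mul_left' (c := (a : ℤ))).sub
    ((((ha.mul_right D).mul_right (zinv a b)).mul_left' (c := (b : ℤ))).of_dvd
      (dvd_of_eq (mul_comm _ _)))
  convert hsub using 2
  simp only [crtSqrtOne]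
  ring

theorem statement12_general (q M : ℕ) (hqodd : Odd q)
    (hcop : Nat.Coprime q M) (D r δ : ℤ) :
    (∑ v ∈ (Finset.range q).filter (fun v : ℕ => ((v : ZMod q)) ^ 2 = 1),
        e (((zinv q (M : ℤ) * D * (v : ℤ) : ℤ) : ℝ) / (q : ℝ) +
          ((δ * zinv M (q : ℤ) * r ^ 2 : ℤ) : ℝ) / (M : ℝ))) =
      ∑ a ∈ q.divisors.filter (fun a => Nat.Coprime a (q / a)),
        e (((zinv (q / a) (M : ℤ) * D * zinv (q / a) (a : ℤ) : ℤ) : ℝ) / ((q / a : ℕ) : ℝ) -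
          ((zinv a (M : ℤ) * D * zinv a ((q / a : ℕ) : ℤ) : ℤ) : ℝ) / ((a : ℕ) : ℝ) +
          ((δ * zinv M ((a * (q / a) : ℕ) : ℤ) * r ^ 2 : ℤ) : ℝ) / (M : ℝ)) := by
  rw [sum_filter_sq_eq_one_eq_sum_coprime_divisors hqodd
    (fun m => e (((zinv q M * D * m : ℤ) : ℝ) / q + ((δ * zinv M q * r ^ 2 : ℤ) : ℝ) / M))
    fun m n h => by rw [e_add, e_add, e_intCast_div_congr (h.mul_left _)]]
  refine sum_congr rfl fun a ha => ?_
  obtain ⟨b, rfl, hb, _, _, -⟩ := exists_eq_mul_of_mem_coprime_divisors ha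
  rw [hb, e_add, e_add, e_sub_eq_e_crtSqrtOne hcop.symm]

/-- Rewriting the sum over square roots of unity mod `q` as a sum over coprime
factorizations `q = ab`. -/
theorem statement12 (q M : ℕ) (hq : 0 < q) (hqodd : Odd q) (hM : 0 < M)
    (hcop : Nat.Coprime q M) (D r δ : ℤ) (hδ : δ = 1 ∨ δ = -1) :
    (∑ v ∈ (Finset.range q).filter (fun v : ℕ => ((v : ZMod q)) ^ 2 = 1),
        e (((zinv q (M : ℤ) * D * (v : ℤ) : ℤ) : ℝ) / (q : ℝ) +
          ((δ * zinv M (q : ℤ) * r ^ 2 : ℤ) : ℝ) / (M : ℝ))) =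
      ∑ a ∈ q.divisors.filter (fun a => Nat.Coprime a (q / a)),
        e (((zinv (q / a) (M : ℤ) * D * zinv (q / a) (a : ℤ) : ℤ) : ℝ) / ((q / a : ℕ) : ℝ) -
          ((zinv a (M : ℤ) * D * zinv a ((q / a : ℕ) : ℤ) : ℤ) : ℝ) / ((a : ℕ) : ℝ) +
          ((δ * zinv M ((a * (q / a) : ℕ) : ℤ) * r ^ 2 : ℤ) : ℝ) / (M : ℝ)) :=
  statement12_general q M hqodd hcop D r δ
end
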